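/- arXiv:1603.00209 — 4 statements merged into one kernel-verified Lean document; each statement's English description precedes it below -/
import Mathlib

section
/- Let γ : ℝ³ → ℝ³ be defined by γ(x,y,z) = (-x, -z/√(1+x²/4), y·√(1+x²/4)). Let u be the 2×2 rotation matrix (1/√(1+x²/4))·[[x/2, 1],[-1, x/2]] and v = -u. Then for the Heisenberg group element n(x,y,z) = [[1, x, z+xy/2],[0,1,y],[0,0,1]], one has diag(u,1) · n(x,y,z) · diag(v,1) = n(γ(x,y,z)). -/
open Matrix

/-- The Heisenberg group element `n(x,y,z)`. -/
noncomputable def heisEl (x y z : ℝ) : Matrix (Fin 3) (Fin 3) ℝ :=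
  !![1, x, z + x * y / 2; 0, 1, y; 0, 0, 1]

/-- The map `γ(x,y,z) = (-x, -z/√(1+x²/4), y·√(1+x²/4))`. -/
noncomputable def gammaMap : ℝ × ℝ × ℝ → ℝ × ℝ × ℝ :=
  fun p => (-p.1, -p.2.2 / Real.sqrt (1 + p.1 ^ 2 / 4), p.2.1 * Real.sqrt (1 + p.1 ^ 2 / 4))

/-- The rotation matrix `u`. -/
noncomputable def uRot (x : ℝ) : Matrix (Fin 2) (Fin 2) ℝ :=
  (1 / Real.sqrt (1 + x ^ 2 / 4)) • !![x / 2, 1; -1, x / 2]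

/-- `diag(u, 1)`, the block diagonal 3×3 matrix with 2×2 block `u` and scalar `1`. -/
noncomputable def diagBlock (u : Matrix (Fin 2) (Fin 2) ℝ) : Matrix (Fin 3) (Fin 3) ℝ :=
  Matrix.reindex finSumFinEquiv finSumFinEquiv
    (Matrix.fromBlocks u 0 0 (1 : Matrix (Fin 1) (Fin 1) ℝ))

/-!
Both sides are affine matrices `[[A, b], [0, 1]]`, and conjugating by `diag(u, 1)` on the left and
`diag(v, 1)` on the right sends `(A, b)` to `(u A v, u b)`. For `n(x,y,z)` the linear part is the
shear `[[1, x], [0, 1]]`; writing `u = s⁻¹ R` with `R = [[x/2, 1], [-1, x/2]]` and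
`s² = 1 + x²/4 = det R`, one has `R [[1, x], [0, 1]] R = s² [[-1, x], [0, -1]]`, so `u A (-u)` is the
shear by `-x`, and `u` applied to the translation `(z + xy/2, y)` gives that of `n(γ(x,y,z))`.
-/

section AffineBlock

variable {R : Type*} [Semiring R] {n : ℕ}

def affineBlock (A : Matrix (Fin n) (Fin n) R) (b : Matrix (Fin n) (Fin 1) R) :
    Matrix (Fin (n + 1)) (Fin (n + 1)) R :=
  reindex finSumFinEquiv finSumFinEquiv (fromBlocks A b 0 1)

lemma affineBlock_mul_affineBlock (A A' : Matrix (Fin n) (Fin n) R)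
    (b b' : Matrix (Fin n) (Fin 1) R) :
    affineBlock A b * affineBlock A' b' = affineBlock (A * A') (A * b' + b) := by
  simp [affineBlock, reindex_apply, submatrix_mul_equiv, fromBlocks_multiply]

end AffineBlock

lemma diagBlock_mul_affineBlock_mul_diagBlock (u v A : Matrix (Fin 2) (Fin 2) ℝ)
    (b : Matrix (Fin 2) (Fin 1) ℝ) :
    diagBlock u * affineBlock A b * diagBlock v = affineBlock (u * A * v) (u * b) := by
  change affineBlock u 0 * affineBlock A b * affineBlock v 0 = _
  simp only [affineBlock_mul_affineBlock, Matrix.mul_zero, add_zero, zero_add]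

lemma heisEl_eq_affineBlock (x y z : ℝ) :
    heisEl x y z = affineBlock !![1, x; 0, 1] !![z + x * y / 2; y] := by
  ext i j
  fin_cases i <;> fin_cases j <;> rfl

lemma rot_mul_shear_mul_rot (x : ℝ) :
    !![x / 2, 1; -1, x / 2] * !![1, x; 0, 1] * !![x / 2, 1; -1, x / 2] =
      (1 + x ^ 2 / 4) • !![-1, x; 0, -1] := by
  ext i j
  fin_cases i <;> fin_cases j <;> simp <;> ring

lemma sqrt_one_add_sq_div_four_sq (x : ℝ) : Real.sqrt (1 + x ^ 2 / 4) ^ 2 = 1 + x ^ 2 / 4 :=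
  Real.sq_sqrt (by positivity)

lemma uRot_mul_mul_neg_uRot (x : ℝ) :
    uRot x * !![1, x; 0, 1] * -uRot x = !![1, -x; 0, 1] := by
  have hs := sqrt_one_add_sq_div_four_sq x
  have hs0 : Real.sqrt (1 + x ^ 2 / 4) ≠ 0 := by positivity
  simp only [uRot, mul_neg, Matrix.smul_mul, Matrix.mul_smul, smul_smul, rot_mul_shear_mul_rot]
  generalize √(1 + x ^ 2 / 4) = s at hs hs0 ⊢
  have hscalar : 1 / s * (1 / s * (1 + x ^ 2 / 4)) = 1 := by
    field_simp
    linear_combination (-4) * hs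
  rw [hscalar, one_smul]
  ext i j
  fin_cases i <;> fin_cases j <;> simp

lemma uRot_mul_translation (x y z : ℝ) :
    uRot x * !![z + x * y / 2; y] =
      !![y * √(1 + x ^ 2 / 4) + -x * (-z / √(1 + x ^ 2 / 4)) / 2; -z / √(1 + x ^ 2 / 4)] := by
  have hs := sqrt_one_add_sq_div_four_sq x
  have hs0 : Real.sqrt (1 + x ^ 2 / 4) ≠ 0 := by positivity
  unfold uRot
  generalize √(1 + x ^ 2 / 4) = s at hs hs0 ⊢
  ext i j
  fin_cases i <;> fin_cases j <;> simp <;> field_simp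
  · linear_combination (-4 * y) * hs
  · ring

theorem conj_heisenberg_eq (x y z : ℝ) :
    diagBlock (uRot x) * heisEl x y z * diagBlock (-(uRot x)) =
      heisEl (gammaMap (x, y, z)).1 (gammaMap (x, y, z)).2.1 (gammaMap (x, y, z)).2.2 := by
  rw [heisEl_eq_affineBlock, diagBlock_mul_affineBlock_mul_diagBlock, uRot_mul_mul_neg_uRot,
    uRot_mul_translation, heisEl_eq_affineBlock]
  rfl
end

section
/- For any positive semidefinite a ∈ M_n(ℂ), the Schur multiplication norm ‖a‖_S = sup{‖a ∘ b‖ : ‖b‖ ≤ 1} equals max_{1≤i≤n} a_{ii}, where ∘ is entrywise (Hadamard) product and ‖·‖ the operator norm. -/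
/-!
Write `a = cᴴ c` and let `D_k` be the diagonal matrix carrying the `k`-th row of `c`. Then
`a ∘ b = ∑ₖ D_kᴴ b D_k` and `a ∘ 1 = ∑ₖ D_kᴴ D_k`. For operators on a Hilbert space,
`⟨(∑ₖ d_k* t d_k) x, y⟩ = ∑ₖ ⟨t d_k x, d_k y⟩`, and Cauchy–Schwarz followed by AM–GM bounds this by
`‖t‖ ‖∑ₖ d_k* d_k‖` for unit vectors `x, y`. Hence `‖a ∘ b‖ ≤ ‖b‖ ‖a ∘ 1‖`, with equality at
`b = 1`, and `a ∘ 1` is the diagonal part of `a`, whose norm is its largest diagonal entry.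
-/

open scoped ComplexOrder

noncomputable section

/-- The operator norm of a complex `n × n` matrix, acting on `ℓ²({1,…,n})`. -/
def opNorm {n : ℕ} (a : Matrix (Fin n) (Fin n) ℂ) : ℝ :=
  ‖Matrix.toEuclideanCLM (𝕜 := ℂ) a‖

/-- The Schur multiplier norm: `‖a‖_S = sup {‖a ∘ b‖ : ‖b‖ ≤ 1}`, where `∘` is the Hadamard
(entrywise) product. -/
def schurNorm {n : ℕ} (a : Matrix (Fin n) (Fin n) ℂ) : ℝ :=
  sSup {r | ∃ b : Matrix (Fin n) (Fin n) ℂ, opNorm b ≤ 1 ∧ r = opNorm (Matrix.hadamard a b)}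

namespace ContinuousLinearMap

open InnerProductSpace RCLike

variable {𝕜 E F ι : Type*} [RCLike 𝕜] [NormedAddCommGroup E] [InnerProductSpace 𝕜 E]
  [CompleteSpace E] [NormedAddCommGroup F] [InnerProductSpace 𝕜 F] [CompleteSpace F]

theorem sum_norm_sq_apply_le (s : Finset ι) (D : ι → E →L[𝕜] F) (x : E) :
    ∑ k ∈ s, ‖D k x‖ ^ 2 ≤ ‖∑ k ∈ s, adjoint (D k) ∘L D k‖ * ‖x‖ ^ 2 := by
  set P := ∑ k ∈ s, adjoint (D k) ∘L D k
  calc ∑ k ∈ s, ‖D k x‖ ^ 2 = re (inner 𝕜 (P x) x) := by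
        simp [P, sum_apply, sum_inner, adjoint_inner_left]
    _ ≤ ‖P x‖ * ‖x‖ := re_inner_le_norm _ _
    _ ≤ ‖P‖ * ‖x‖ ^ 2 := by
        rw [sq, ← mul_assoc]; exact mul_le_mul_of_nonneg_right (P.le_opNorm x) (norm_nonneg x)

theorem norm_sum_star_mul_mul_le (s : Finset ι) (D : ι → E →L[𝕜] E) (T : E →L[𝕜] E) :
    ‖∑ k ∈ s, star (D k) * T * D k‖ ≤ ‖T‖ * ‖∑ k ∈ s, star (D k) * D k‖ := by
  simp only [star_eq_adjoint, mul_def]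
  set P := ∑ k ∈ s, adjoint (D k) ∘L D k
  refine opNorm_le_of_re_inner_le (by positivity) fun x y hx hy ↦ ?_
  calc re (inner 𝕜 ((∑ k ∈ s, (adjoint (D k) ∘L T) ∘L D k) x) y)
      = re (∑ k ∈ s, inner 𝕜 (T (D k x)) (D k y)) := by
        simp [sum_apply, sum_inner, adjoint_inner_left]
    _ ≤ ∑ k ∈ s, ‖T‖ * (‖D k x‖ * ‖D k y‖) := by
        refine (re_le_norm _).trans <| (norm_sum_le _ _).trans <| Finset.sum_le_sum fun k _ ↦ ?_
        calc ‖inner 𝕜 (T (D k x)) (D k y)‖ ≤ ‖T (D k x)‖ * ‖D k y‖ := norm_inner_le_norm _ _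
          _ ≤ ‖T‖ * ‖D k x‖ * ‖D k y‖ := by gcongr; exact T.le_opNorm _
          _ = ‖T‖ * (‖D k x‖ * ‖D k y‖) := mul_assoc _ _ _
    _ ≤ ‖T‖ * ((‖P‖ * ‖x‖ ^ 2 + ‖P‖ * ‖y‖ ^ 2) / 2) := by
        rw [← Finset.mul_sum]
        gcongr
        calc ∑ k ∈ s, ‖D k x‖ * ‖D k y‖ ≤ ∑ k ∈ s, (‖D k x‖ ^ 2 + ‖D k y‖ ^ 2) / 2 :=
              Finset.sum_le_sum fun k _ ↦ by linarith [two_mul_le_add_sq ‖D k x‖ ‖D k y‖]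
          _ = (∑ k ∈ s, ‖D k x‖ ^ 2 + ∑ k ∈ s, ‖D k y‖ ^ 2) / 2 := by
              rw [← Finset.sum_div, Finset.sum_add_distrib]
          _ ≤ _ := by gcongr <;> exact sum_norm_sq_apply_le s D _
    _ = ‖T‖ * ‖P‖ := by rw [hx, hy]; ring

end ContinuousLinearMap

theorem pi_norm_eq_iSup_norm {ι E : Type*} [Fintype ι] [SeminormedAddGroup E] (v : ι → E) :
    ‖v‖ = ⨆ i, ‖v i‖ :=
  le_antisymm
    ((pi_norm_le_iff_of_nonneg (Real.iSup_nonneg fun _ ↦ norm_nonneg _)).2 fun i ↦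
      le_ciSup (f := fun i ↦ ‖v i‖) (Finite.bddAbove_range _) i)
    (Real.iSup_le (fun i ↦ norm_le_pi_norm v i) (norm_nonneg _))

namespace Matrix

open scoped Matrix.Norms.L2Operator MatrixOrder

theorem conjTranspose_mul_self_hadamard {m n α : Type*} [Fintype m] [Fintype n] [DecidableEq n]
    [CommSemiring α] [StarRing α] (c : Matrix m n α) (b : Matrix n n α) :
    (cᴴ * c) ⊙ b = ∑ k, (diagonal (c k))ᴴ * b * diagonal (c k) := by
  ext i j
  simp only [hadamard_apply, sum_apply, diagonal_conjTranspose, mul_diagonal, diagonal_mul]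
  simp only [mul_apply, conjTranspose_apply, Finset.sum_mul, Pi.star_apply]
  exact Finset.sum_congr rfl fun k _ ↦ by ring

variable {𝕜 n : Type*} [RCLike 𝕜] [Fintype n] [DecidableEq n] {a : Matrix n n 𝕜}

theorem PosSemidef.norm_hadamard_le (ha : a.PosSemidef) (b : Matrix n n 𝕜) :
    ‖a ⊙ b‖ ≤ ‖b‖ * ‖a ⊙ 1‖ := by
  obtain ⟨c, rfl⟩ := CStarAlgebra.nonneg_iff_eq_star_mul_self.mp ha.nonneg
  rw [star_eq_conjTranspose, conjTranspose_mul_self_hadamard, conjTranspose_mul_self_hadamard]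
  simp only [cstar_norm_def, map_sum, map_mul, mul_one, ← star_eq_conjTranspose, map_star]
  exact ContinuousLinearMap.norm_sum_star_mul_mul_le _ _ _

theorem PosSemidef.norm_hadamard_one (ha : a.PosSemidef) : ‖a ⊙ 1‖ = ⨆ i, RCLike.re (a i i) := by
  rw [hadamard_one, l2_opNorm_diagonal, pi_norm_eq_iSup_norm]
  congr with i
  simpa using congrArg RCLike.re (RCLike.norm_of_nonneg' ha.diag_nonneg)

theorem PosSemidef.isGreatest_norm_hadamard (ha : a.PosSemidef) :
    IsGreatest {r | ∃ b : Matrix n n 𝕜, ‖b‖ ≤ 1 ∧ r = ‖a ⊙ b‖} ‖a ⊙ 1‖ := by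
  refine ⟨⟨1, ?_, rfl⟩, ?_⟩
  · rw [cstar_norm_def, map_one]
    exact ContinuousLinearMap.norm_id_le
  · rintro _ ⟨b, hb, rfl⟩
    exact (ha.norm_hadamard_le b).trans (mul_le_of_le_one_left (norm_nonneg _) hb)

end Matrix

/-- For a positive semidefinite matrix, the Schur multiplier norm equals the largest diagonal
entry. -/
theorem schurNorm_posSemidef {n : ℕ} (a : Matrix (Fin n) (Fin n) ℂ)
    (ha : a.PosSemidef) : schurNorm a = ⨆ i : Fin n, Complex.re (a i i) :=
  -- `opNorm` is definitionally the norm of the scoped instance `Matrix.Norms.L2Operator`.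
  ha.isGreatest_norm_hadamard.csSup_eq.trans ha.norm_hadamard_one

end
end

section
/- Let a ∈ M_n(ℂ). There exist positive semidefinite b, c with b_{ii} ≤ 1, c_{ii} ≤ 1 and [[b, a*],[a, c]] ≥ 0 if and only if there exist a Hilbert space H and vectors ξ₁,…,ξ_n, η₁,…,η_n in the closed unit ball of H with a_{ij} = ⟨ξ_i, η_j⟩ for all i, j. -/
/-!
Factor the positive semidefinite block matrix as `BᴴB`; the columns of `B` are then vectors whose
Gram matrix it is, and conversely every Gram matrix is positive semidefinite. The diagonal of a
Gram matrix holds squared norms, and the Gram matrix of the concatenated family `(η, ξ)` is exactly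
`[[gram η, aᴴ], [a, gram ξ]]` for `a i j = ⟪ξ i, η j⟫`.
-/

open scoped ComplexOrder MatrixOrder InnerProductSpace

namespace Matrix

variable {𝕜 m n E : Type*} [RCLike 𝕜]

theorem PosSemidef.exists_eq_gram [Fintype m] {A : Matrix m m 𝕜} (hA : A.PosSemidef) :
    ∃ v : m → EuclideanSpace 𝕜 m, A = gram 𝕜 v := by
  classical
  obtain ⟨B, rfl⟩ := CStarAlgebra.nonneg_iff_eq_star_mul_self.mp hA.nonneg
  refine ⟨fun i ↦ WithLp.toLp 2 fun k ↦ B k i, ?_⟩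
  ext i j
  simp [mul_apply, PiLp.inner_apply, mul_comm]

variable [SeminormedAddCommGroup E] [InnerProductSpace 𝕜 E]

theorem re_gram_self_le_one_iff (v : n → E) (i : n) :
    RCLike.re (gram 𝕜 v i i) ≤ 1 ↔ ‖v i‖ ≤ 1 := by
  rw [gram_apply, inner_self_eq_norm_sq, sq_le_one_iff₀ (norm_nonneg _)]

theorem gram_sum_elim (v : m → E) (w : n → E) :
    gram 𝕜 (Sum.elim v w) =
      fromBlocks (gram 𝕜 v) (of fun i j ↦ ⟪w i, v j⟫_𝕜)ᴴ (of fun i j ↦ ⟪w i, v j⟫_𝕜) (gram 𝕜 w) := by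
  ext (i | i) (j | j) <;> simp [inner_conj_symm]

end Matrix

open Matrix

/-- Block-matrix characterization of Gram representations: there exist positive semidefinite
`b, c` with diagonal entries `≤ 1` and `[[b, a*], [a, c]] ≥ 0` iff there are a Hilbert space `H`
and vectors `ξ₁,…,ξ_n, η₁,…,η_n` in the closed unit ball of `H` with `a_{ij} = ⟨ξ_i, η_j⟩`. -/
theorem posSemidef_block_iff_gram {n : ℕ} (a : Matrix (Fin n) (Fin n) ℂ) :
    (∃ b c : Matrix (Fin n) (Fin n) ℂ, b.PosSemidef ∧ c.PosSemidef ∧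
      (∀ i, Complex.re (b i i) ≤ 1) ∧ (∀ i, Complex.re (c i i) ≤ 1) ∧
      (Matrix.fromBlocks b a.conjTranspose a c).PosSemidef) ↔
    (∃ (H : Type) (_ : NormedAddCommGroup H) (_ : InnerProductSpace ℂ H)
      (ξ η : Fin n → H), (∀ i, ‖ξ i‖ ≤ 1) ∧ (∀ i, ‖η i‖ ≤ 1) ∧
      ∀ i j, a i j = inner ℂ (ξ i) (η j)) := by
  constructor
  · rintro ⟨b, c, -, -, hb, hc, hM⟩
    obtain ⟨v, hv⟩ := hM.exists_eq_gram
    refine ⟨_, inferInstance, inferInstance, v ∘ Sum.inr, v ∘ Sum.inl, fun i ↦ ?_, fun i ↦ ?_,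
      fun i j ↦ congrFun₂ hv (Sum.inr i) (Sum.inl j)⟩
    · rw [Function.comp_apply, ← re_gram_self_le_one_iff (𝕜 := ℂ), ← hv]
      exact hc i
    · rw [Function.comp_apply, ← re_gram_self_le_one_iff (𝕜 := ℂ), ← hv]
      exact hb i
  · rintro ⟨H, _, _, ξ, η, hξ, hη, ha⟩
    obtain rfl : a = of fun i j ↦ ⟪ξ i, η j⟫_ℂ := Matrix.ext ha
    refine ⟨gram ℂ η, gram ℂ ξ, posSemidef_gram ℂ η, posSemidef_gram ℂ ξ,
      fun i ↦ (re_gram_self_le_one_iff (𝕜 := ℂ) η i).2 (hη i),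
      fun i ↦ (re_gram_self_le_one_iff (𝕜 := ℂ) ξ i).2 (hξ i), ?_⟩
    rw [← gram_sum_elim]
    exact posSemidef_gram ℂ _
end

section
/- Let G be a locally compact group, Γ ≤ G a discrete subgroup, and ξ, η : G → H bounded maps into a Hilbert space H realizing a function φ on G via φ(y⁻¹x) = ⟨ξ(x),η(y)⟩. Define maps into L²(G, H) by ξ̂(x)(z) = f(z)ξ(zx) and η̂(x)(z) = f(z)η(zx), for a fixed f ∈ C_c(G) with ‖f‖₂ = 1. Then ⟨ξ̂(x), η̂(y)⟩ = φ(y⁻¹x) for all x, y ∈ G, and sup_x ‖ξ̂(x)‖₂ ≤ sup_x ‖ξ(x)‖, sup_y ‖η̂(y)‖₂ ≤ sup_y ‖η(y)‖. -/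
open MeasureTheory

/-- Given bounded measurable `ξ, η : G → H` realizing `φ(y⁻¹x) = ⟨ξ(x), η(y)⟩`, and
`f ∈ C_c(G)` with `‖f‖₂ = 1`, the maps `ξ̂(x) = z ↦ f(z)ξ(zx)` and `η̂(y) = z ↦ f(z)η(zy)`
into `L²(G, H)` satisfy `⟨ξ̂(x), η̂(y)⟩ = φ(y⁻¹x)` and `‖ξ̂(x)‖₂ ≤ sup ‖ξ‖`,
`‖η̂(y)‖₂ ≤ sup ‖η‖`. -/
theorem gram_rep_continuous_improvement
    (G : Type*) [Group G] [TopologicalSpace G] [IsTopologicalGroup G]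
    [LocallyCompactSpace G] [MeasurableSpace G] [BorelSpace G]
    (μ : Measure G) [μ.IsHaarMeasure]
    (H : Type*) [NormedAddCommGroup H] [InnerProductSpace ℂ H]
    (φ : G → ℂ) (ξ η : G → H)
    (hξm : AEStronglyMeasurable ξ μ) (hηm : AEStronglyMeasurable η μ)
    (C D : ℝ) (hξ : ∀ x, ‖ξ x‖ ≤ C) (hη : ∀ y, ‖η y‖ ≤ D)
    (hrep : ∀ x y : G, φ (y⁻¹ * x) = inner ℂ (ξ x) (η y))
    (f : G → ℂ) (hfc : Continuous f) (hfsupp : HasCompactSupport f)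
    (hf2 : ∫ z, ‖f z‖ ^ 2 ∂μ = 1) :
    (∀ x y : G, ∫ z, (inner ℂ (f z • ξ (z * x)) (f z • η (z * y)) : ℂ) ∂μ = φ (y⁻¹ * x)) ∧
    (∀ x : G, Real.sqrt (∫ z, ‖f z • ξ (z * x)‖ ^ 2 ∂μ) ≤ C) ∧
    (∀ y : G, Real.sqrt (∫ z, ‖f z • η (z * y)‖ ^ 2 ∂μ) ≤ D) := by
  have hfint : Integrable (fun z => ‖f z‖ ^ 2) μ := by
    apply Continuous.integrable_of_hasCompactSupport (by continuity)
    exact hfsupp.comp_left (g := fun c : ℂ => ‖c‖ ^ 2) (by simp)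
  have key : ∀ (E : ℝ) (ζ : G → H), (∀ x, ‖ζ x‖ ≤ E) →
      ∀ x : G, Real.sqrt (∫ z, ‖f z • ζ (z * x)‖ ^ 2 ∂μ) ≤ E := by
    intro C ζ hζ x
    have hC : 0 ≤ C := le_trans (norm_nonneg _) (hζ 1)
    have h1 : (∫ z, ‖f z • ζ (z * x)‖ ^ 2 ∂μ) ≤ ∫ z, ‖f z‖ ^ 2 * C ^ 2 ∂μ := by
      apply integral_mono_of_nonneg
      · filter_upwards with z; positivity
      · exact hfint.mul_const _
      · filter_upwards with z
        rw [norm_smul, mul_pow]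
        exact mul_le_mul_of_nonneg_left
          (pow_le_pow_left₀ (norm_nonneg _) (hζ _) 2) (by positivity)
    have h2 : (∫ z, ‖f z‖ ^ 2 * C ^ 2 ∂μ) = C ^ 2 := by
      rw [integral_mul_const, hf2, one_mul]
    calc Real.sqrt (∫ z, ‖f z • ζ (z * x)‖ ^ 2 ∂μ)
        ≤ Real.sqrt (C ^ 2) := Real.sqrt_le_sqrt (h1.trans_eq h2)
      _ = C := by rw [Real.sqrt_sq hC]
  refine ⟨?_, key C ξ hξ, key D η hη⟩
  intro x y
  have heq : ∀ z : G, (inner ℂ (f z • ξ (z * x)) (f z • η (z * y)) : ℂ) =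
      ((‖f z‖ ^ 2 : ℝ) : ℂ) * φ (y⁻¹ * x) := by
    intro z
    rw [inner_smul_left, inner_smul_right]
    have : φ (y⁻¹ * x) = inner ℂ (ξ (z * x)) (η (z * y)) := by
      have := hrep (z * x) (z * y)
      rwa [mul_inv_rev, mul_assoc, inv_mul_cancel_left] at this
    rw [this]
    have hcf : (starRingEnd ℂ) (f z) * f z = ((‖f z‖ ^ 2 : ℝ) : ℂ) := by
      rw [mul_comm, Complex.mul_conj]
      norm_cast
      simp [Complex.normSq_eq_norm_sq]
    rw [← mul_assoc, hcf]
  calc (∫ z, (inner ℂ (f z • ξ (z * x)) (f z • η (z * y)) : ℂ) ∂μ)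
      = ∫ z, ((‖f z‖ ^ 2 : ℝ) : ℂ) * φ (y⁻¹ * x) ∂μ := by
        exact integral_congr_ae (Filter.Eventually.of_forall heq)
    _ = (∫ z, ((‖f z‖ ^ 2 : ℝ) : ℂ) ∂μ) * φ (y⁻¹ * x) := integral_mul_const _ _
    _ = ((∫ z, ‖f z‖ ^ 2 ∂μ : ℝ) : ℂ) * φ (y⁻¹ * x) := congrArg (· * φ (y⁻¹ * x)) (integral_ofReal (f := fun z => ‖f z‖ ^ 2))
    _ = φ (y⁻¹ * x) := by rw [hf2]; simp
end
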